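/- arXiv:2008.02060 — 3 statements merged into one kernel-verified Lean document; each statement's English description precedes it below -/
import Mathlib

section
/- Let G be an undirected edge-weighted graph with spanning tree T, and let e, e' be two distinct edges of T that are independent (neither lies in the subtree below the other). Then the weight of the cut of G determined by {e,e'} equals w(T_e) + w(T_{e'}) - 2·w(T_e, T_{e'}), where T_e denotes the vertex set of the subtree of T below e, w(T_e) is the total weight of edges of G with exactly one endpoint in T_e, and w(T_e, T_{e'}) is the total weight of edges of G with one endpoint in T_e and the other in T_{e'}. -/
/-!
For disjoint `Te, Te'`, an edge leaving `Te` either leaves `Te ∪ Te'` or ends in `Te'`, and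
symmetrically for `Te'`. So `w(Te) + w(Te')` counts every edge of the cut of `Te ∪ Te'` once
and every edge between `Te` and `Te'` twice, once from each side.
-/

open Finset

/-- Total weight of graph edges with one endpoint in `A` and the other in `B`
(summed over ordered pairs). -/
def betw {V : Type*} [Fintype V] (w : V → V → ℝ) (A B : Finset V) : ℝ :=
  ∑ u ∈ A, ∑ v ∈ B, w u v

/-- Weight of the cut `(S, V \\ S)`: total weight of edges leaving `S`. -/
def cutw {V : Type*} [Fintype V] [DecidableEq V] (w : V → V → ℝ) (S : Finset V) : ℝ :=
  betw w S Sᶜ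

section Weights

variable {V : Type*} [Fintype V] (w : V → V → ℝ)

lemma betw_union_left [DecidableEq V] {A B : Finset V} (C : Finset V) (h : Disjoint A B) :
    betw w (A ∪ B) C = betw w A C + betw w B C := by
  simp only [betw, sum_union h]

lemma betw_union_right [DecidableEq V] (A : Finset V) {B C : Finset V} (h : Disjoint B C) :
    betw w A (B ∪ C) = betw w A B + betw w A C := by
  simp only [betw, sum_union h, sum_add_distrib]

lemma betw_comm (hsym : ∀ u v, w u v = w v u) (A B : Finset V) :
    betw w A B = betw w B A := by
  rw [betw, sum_comm]
  exact sum_congr rfl fun u _ => sum_congr rfl fun v _ => hsym v u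

lemma compl_eq_compl_sup_sup_of_disjoint {α : Type*} [BooleanAlgebra α] {a b : α}
    (h : Disjoint a b) : aᶜ = (a ⊔ b)ᶜ ⊔ b := by
  rw [compl_sup, sup_comm, sup_inf_left, sup_compl_eq_top, inf_top_eq, sup_eq_right.mpr]
  exact h.symm.le_compl_right

lemma cutw_eq_betw_compl_union_add_betw [DecidableEq V] {A B : Finset V} (h : Disjoint A B) :
    cutw w A = betw w A (A ∪ B)ᶜ + betw w A B :=
  calc cutw w A = betw w A ((A ∪ B)ᶜ ∪ B) :=
        congrArg (betw w A) (compl_eq_compl_sup_sup_of_disjoint h)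
    _ = betw w A (A ∪ B)ᶜ + betw w A B :=
      betw_union_right w A (disjoint_compl_left.mono_right subset_union_right)

end Weights

theorem stmt_0_general {V : Type*} [Fintype V] [DecidableEq V] (w : V → V → ℝ)
    (hsym : ∀ u v, w u v = w v u)
    (Te Te' : Finset V) (hdisj : Disjoint Te Te') :
    cutw w (Te ∪ Te') = cutw w Te + cutw w Te' - 2 * betw w Te Te' := by
  have hTe := cutw_eq_betw_compl_union_add_betw w hdisj
  have hTe' := cutw_eq_betw_compl_union_add_betw w hdisj.symm
  rw [union_comm Te', betw_comm w hsym Te' Te] at hTe'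
  rw [cutw, betw_union_left w _ hdisj, hTe, hTe']
  ring

/-- If tree edges `e, e'` are independent, so that their subtrees `Te, Te'` are
disjoint, then the weight of the cut determined by {e,e'}, i.e. the cut
`(Te ∪ Te', V \ (Te ∪ Te'))`, equals `w(Te) + w(Te') - 2 w(Te, Te')`. -/
theorem stmt_0 {V : Type*} [Fintype V] [DecidableEq V] (w : V → V → ℝ)
    (hsym : ∀ u v, w u v = w v u) (hnn : ∀ u v, 0 ≤ w u v)
    (Te Te' : Finset V) (hdisj : Disjoint Te Te') :
    cutw w (Te ∪ Te') = cutw w Te + cutw w Te' - 2 * betw w Te Te' :=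
  stmt_0_general w hsym Te Te' hdisj
end

section
/- Let e be an edge of a rooted spanning tree T and let e' be a descendant edge of e. If w(T_e) ≥ 2·w(T_{e'}, V \ T_e), then the weight of the cut determined by {e,e'} is at least w(T_{e'}). -/
/-! With `S = T_{e'} ⊆ T = T_e` and `D = T \ S`, the cuts of `T`, `S` and `D` split into the
three pieces `w(S, Tᶜ)`, `w(D, Tᶜ)` and `w(S, D)`: `w(T) = w(S, Tᶜ) + w(D, Tᶜ)`,
`w(S) = w(S, Tᶜ) + w(S, D)` and `w(D) = w(D, Tᶜ) + w(S, D)`. The hypothesis `2 w(S, Tᶜ) ≤ w(T)`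
says `w(S, Tᶜ) ≤ w(D, Tᶜ)`, and the common term `w(S, D)` does the rest. -/

open Finset

section

variable {V : Type*} [Fintype V] (w : V → V → ℝ)

variable [DecidableEq V]

lemma betw_sdiff_add_betw_left {A C : Finset V} (h : C ⊆ A) (B : Finset V) :
    betw w (A \ C) B + betw w C B = betw w A B :=
  sum_sdiff h

lemma betw_sdiff_add_betw_right (A : Finset V) {B C : Finset V} (h : C ⊆ B) :
    betw w A (B \ C) + betw w A C = betw w A B := by
  simp only [betw, ← sum_add_distrib, sum_sdiff h]

lemma cutw_eq_betw_sdiff_add_betw_compl {S T : Finset V} (h : S ⊆ T) :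
    cutw w S = betw w S (T \ S) + betw w S Tᶜ := by
  rw [← compl_sdiff_compl, cutw, betw_sdiff_add_betw_right w S (compl_subset_compl.mpr h)]

end

theorem stmt_3_general {V : Type*} [Fintype V] [DecidableEq V] (w : V → V → ℝ)
    (hsym : ∀ u v, w u v = w v u)
    (Te Te' : Finset V) (hsub : Te' ⊆ Te)
    (hni : 2 * betw w Te' Teᶜ ≤ cutw w Te) :
    cutw w Te' ≤ cutw w (Te \ Te') := by
  have hTe : betw w (Te \ Te') Teᶜ + betw w Te' Teᶜ = cutw w Te :=
    betw_sdiff_add_betw_left w hsub Teᶜ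
  have hTe' := cutw_eq_betw_sdiff_add_betw_compl w hsub
  have hD := cutw_eq_betw_sdiff_add_betw_compl w (sdiff_subset (s := Te) (t := Te'))
  rw [Finset.sdiff_sdiff_eq_self hsub, betw_comm w hsym] at hD
  linarith

/-- For a tree edge `e` and a descendant edge `e'` (subtrees `Te' ⊆ Te`):
if `w(Te) ≥ 2 w(Te', V \ Te)` (i.e. `e` is not down-interested in `e'`), then
the cut determined by {e,e'} weighs at least the cut determined by `e'` alone. -/
theorem stmt_3 {V : Type*} [Fintype V] [DecidableEq V] (w : V → V → ℝ)
    (hsym : ∀ u v, w u v = w v u) (hnn : ∀ u v, 0 ≤ w u v)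
    (Te Te' : Finset V) (hsub : Te' ⊆ Te)
    (hni : 2 * betw w Te' Teᶜ ≤ cutw w Te) :
    cutw w Te' ≤ cutw w (Te \ Te') :=
  stmt_3_general w hsym Te Te' hsub hni
end

section
/- Fix a rooted spanning tree T of weighted graph G and let P' = (p_1,…,p_k) and Q' = (q_1,…,l_ℓ) be sequences of edges from two vertex-disjoint paths of T, where P' is ordered root-wards, all edges of P' are independent of all edges of Q', and Q' is ordered leaf-wards. Define M[i,j] = weight of the cut determined by {p_i, q_j}. Then M satisfies the Monge condition: M[i,j] - M[i,j+1] ≥ M[i+1,j] - M[i+1,j+1] for all valid i, j; equivalently M[i,j] + M[i+1,j+1] ≥ M[i,j+1] + M[i+1,j]. -/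
/-!
The cut function `S ↦ cutw w S` is submodular when the weights are nonnegative: in
`cutw (S ∪ T) + cutw (S ∩ T) ≤ cutw S + cutw T` the slack is the weight between `S \ T`
and `T \ S`. The two sets `P (i+1) ∪ Q (j+1)` and `P i ∪ Q j` have union `P (i+1) ∪ Q j`
and, since the `P`'s and `Q`'s are disjoint, intersection `P i ∪ Q (j+1)`; submodularity
applied to them is the Monge inequality.
-/

open Finset

lemma cutw_eq_sum_ite {V : Type*} [Fintype V] [DecidableEq V] (w : V → V → ℝ)
    (S : Finset V) : cutw w S = ∑ u, ∑ v, if u ∈ S ∧ v ∉ S then w u v else 0 := by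
  simp only [ite_and, ← mem_compl, sum_ite_irrel, sum_const_zero,
    sum_ite_mem, univ_inter, cutw, betw]

theorem cutw_union_add_cutw_inter_le {V : Type*} [Fintype V] [DecidableEq V]
    {w : V → V → ℝ} (hw : ∀ u v, 0 ≤ w u v) (S T : Finset V) :
    cutw w (S ∪ T) + cutw w (S ∩ T) ≤ cutw w S + cutw w T := by
  simp only [cutw_eq_sum_ite, ← sum_add_distrib]
  refine sum_le_sum fun u _ => sum_le_sum fun v _ => ?_
  have hwuv := hw u v
  by_cases huS : u ∈ S <;> by_cases huT : u ∈ T <;> by_cases hvS : v ∈ S <;>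
    by_cases hvT : v ∈ T <;> simp [huS, huT, hvS, hvT, hwuv]

theorem sup_inf_sup_eq_of_disjoint {α : Type*} [DistribLattice α] [OrderBot α]
    {a a' b b' : α} (ha : a' ≤ a) (hb : b' ≤ b) (hab : Disjoint a b) :
    (a ⊔ b') ⊓ (a' ⊔ b) = a' ⊔ b' := by
  rw [inf_sup_right, inf_sup_left, inf_sup_left, inf_eq_right.2 ha, hab.eq_bot,
    inf_eq_left.2 hb]
  simp

theorem stmt_7_general {V : Type*} [Fintype V] [DecidableEq V] (w : V → V → ℝ)
    (hnn : ∀ u v, 0 ≤ w u v)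
    (P Q : ℕ → Finset V) (hP : Monotone P) (hQ : Antitone Q)
    (hdisj : ∀ i j, Disjoint (P i) (Q j)) :
    ∀ i j, cutw w (P i ∪ Q (j+1)) + cutw w (P (i+1) ∪ Q j) ≤
      cutw w (P i ∪ Q j) + cutw w (P (i+1) ∪ Q (j+1)) := by
  intro i j
  have hPi : P i ⊆ P (i+1) := hP i.le_succ
  have hQj : Q (j+1) ⊆ Q j := hQ j.le_succ
  have hunion : (P (i+1) ∪ Q (j+1)) ∪ (P i ∪ Q j) = P (i+1) ∪ Q j := by
    rw [union_union_union_comm, union_eq_left.2 hPi,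
      union_eq_right.2 hQj]
  have hinter : (P (i+1) ∪ Q (j+1)) ∩ (P i ∪ Q j) = P i ∪ Q (j+1) :=
    sup_inf_sup_eq_of_disjoint hPi hQj (hdisj (i+1) j)
  have hsub := cutw_union_add_cutw_inter_le hnn (P (i+1) ∪ Q (j+1)) (P i ∪ Q j)
  rw [hunion, hinter] at hsub
  linarith

/-- Monge condition, independent case. `P i` is the subtree below the `i`-th
edge of `P'` (ordered root-wards, so the subtrees increase), `Q j` the subtree
below the `j`-th edge of `Q'` (ordered leaf-wards, so the subtrees decrease);
all edges of `P'` are independent of all edges of `Q'`. With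
`M i j := cutw (P i ∪ Q j)` the weight of the cut determined by the pair, we have
`M[i,j] + M[i+1,j+1] ≥ M[i,j+1] + M[i+1,j]`, i.e.
`M[i,j] - M[i,j+1] ≥ M[i+1,j] - M[i+1,j+1]`. -/
theorem stmt_7 {V : Type*} [Fintype V] [DecidableEq V] (w : V → V → ℝ)
    (hsym : ∀ u v, w u v = w v u) (hnn : ∀ u v, 0 ≤ w u v)
    (P Q : ℕ → Finset V) (hP : Monotone P) (hQ : Antitone Q)
    (hdisj : ∀ i j, Disjoint (P i) (Q j)) :
    ∀ i j, cutw w (P i ∪ Q (j+1)) + cutw w (P (i+1) ∪ Q j) ≤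
      cutw w (P i ∪ Q j) + cutw w (P (i+1) ∪ Q (j+1)) :=
  stmt_7_general w hnn P Q hP hQ hdisj
end
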